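/- arXiv:1902.09261 — 9 statements merged into one kernel-verified Lean document; each statement's English description precedes it below -/
import Mathlib

section
/- Let x0 > 0, y0 > 0, α > 0 and g, q, b, z_d ∈ ℝ, and let u_α(x) = -g·x²/2 + (g·x0 - q)·x + (g·x0 - q)/α + b. Then (1/2)·∫₀^{y0} ∫₀^{x0} (u_α(x) - z_d)² dx dy = (y0/2)·[ C₁α·g²·x0⁵ + C₂α·q²·x0³ + C₃α·x0·(b - z_d)² + C₄α·g·q·x0⁴ + C₅α·g·x0³·(b - z_d) + C₆α·q·x0²·(b - z_d) ], where C₁α = 2/15 + 2/(3·α·x0) + 1/(α²·x0²), C₂α = 1/3 + 1/(α·x0) + 1/(α²·x0²), C₃α = 1, C₄α = -5/12 - 5/(3·α·x0) - 2/(α²·x0²), C₅α = 2/3 + 2/(α·x0), C₆α = -1 - 2/(α·x0). Moreover C_{iα} → C_i as α → ∞ for each i, where C₁ = 2/15, C₂ = 1/3, C₃ = 1, C₄ = -5/12, C₅ = 2/3, C₆ = -1. -/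
/-! The integrand does not depend on `y` and is the square of a quadratic polynomial in `x`,
so the double integral is `y0` times the value at `x0` of an explicit quintic antiderivative.
Each `C_{iα}` is a polynomial in `1 / (α x0)`, which tends to `0` as `α → ∞`. -/

open Filter Topology

theorem integral_sq_quadratic (a b c r : ℝ) :
    ∫ x in (0 : ℝ)..r, (a * x ^ 2 + b * x + c) ^ 2 =
      a ^ 2 / 5 * r ^ 5 + a * b / 2 * r ^ 4 + (b ^ 2 + 2 * a * c) / 3 * r ^ 3
        + b * c * r ^ 2 + c ^ 2 * r := by
  have hderiv (x : ℝ) : HasDerivAt (fun x => a ^ 2 / 5 * x ^ 5 + a * b / 2 * x ^ 4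
      + (b ^ 2 + 2 * a * c) / 3 * x ^ 3 + b * c * x ^ 2 + c ^ 2 * x) ((a * x ^ 2 + b * x + c) ^ 2) x := by
    refine ((((((hasDerivAt_pow 5 x).const_mul (a ^ 2 / 5)).add
      ((hasDerivAt_pow 4 x).const_mul (a * b / 2))).add
      ((hasDerivAt_pow 3 x).const_mul ((b ^ 2 + 2 * a * c) / 3))).add
      ((hasDerivAt_pow 2 x).const_mul (b * c))).add ((hasDerivAt_id' x).const_mul (c ^ 2))).congr_deriv ?_
    push_cast
    ring
  rw [intervalIntegral.integral_eq_sub_of_hasDerivAt (fun x _ => hderiv x)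
    (Continuous.intervalIntegrable (by fun_prop) _ _)]
  ring

theorem tendsto_add_div_mul_add_div_mul_sq_atTop {x0 : ℝ} (hx0 : 0 < x0) (c d e : ℝ) :
    Tendsto (fun α : ℝ => c + d / (α * x0) + e / (α * x0) ^ 2) atTop (𝓝 c) := by
  have hinv : Tendsto (fun α : ℝ => (α * x0)⁻¹) atTop (𝓝 0) :=
    tendsto_inv_atTop_zero.comp (tendsto_id.atTop_mul_const hx0)
  have := (tendsto_const_nhds (x := c)).add ((hinv.const_mul d).add ((hinv.pow 2).const_mul e))
  rw [mul_zero, zero_pow two_ne_zero, mul_zero, add_zero, add_zero] at this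
  exact this.congr fun α => by ring

theorem stmt_6_general (x0 y0 g q b zd : ℝ) (hx0 : 0 < x0)
    (uα : ℝ → ℝ → ℝ)
    (huα : uα = fun α x =>
      -g * x ^ 2 / 2 + (g * x0 - q) * x + (g * x0 - q) / α + b)
    (C1α C2α C3α C4α C5α C6α : ℝ → ℝ)
    (hC1 : C1α = fun α => 2 / 15 + 2 / (3 * α * x0) + 1 / (α ^ 2 * x0 ^ 2))
    (hC2 : C2α = fun α => 1 / 3 + 1 / (α * x0) + 1 / (α ^ 2 * x0 ^ 2))
    (hC3 : C3α = fun _ => 1)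
    (hC4 : C4α = fun α => -(5 / 12) - 5 / (3 * α * x0) - 2 / (α ^ 2 * x0 ^ 2))
    (hC5 : C5α = fun α => 2 / 3 + 2 / (α * x0))
    (hC6 : C6α = fun α => -1 - 2 / (α * x0)) :
    (∀ α : ℝ, 0 < α →
      (1 / 2) * (∫ _y in (0 : ℝ)..y0, ∫ x in (0 : ℝ)..x0, (uα α x - zd) ^ 2) =
        (y0 / 2) * (C1α α * g ^ 2 * x0 ^ 5 + C2α α * q ^ 2 * x0 ^ 3
          + C3α α * x0 * (b - zd) ^ 2 + C4α α * g * q * x0 ^ 4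
          + C5α α * g * x0 ^ 3 * (b - zd) + C6α α * q * x0 ^ 2 * (b - zd))) ∧
    Tendsto C1α atTop (nhds (2 / 15)) ∧
    Tendsto C2α atTop (nhds (1 / 3)) ∧
    Tendsto C3α atTop (nhds 1) ∧
    Tendsto C4α atTop (nhds (-(5 / 12))) ∧
    Tendsto C5α atTop (nhds (2 / 3)) ∧
    Tendsto C6α atTop (nhds (-1)) := by
  subst huα hC1 hC2 hC3 hC4 hC5 hC6
  have hlim := tendsto_add_div_mul_add_div_mul_sq_atTop hx0
  refine ⟨fun α hα => ?_, (hlim _ (2 / 3) 1).congr fun α => by ring,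
    (hlim _ 1 1).congr fun α => by ring, tendsto_const_nhds,
    (hlim _ (-(5 / 3)) (-2)).congr fun α => by ring, (hlim _ 2 0).congr fun α => by ring,
    (hlim _ (-2) 0).congr fun α => by ring⟩
  have hu : ∀ x : ℝ, -g * x ^ 2 / 2 + (g * x0 - q) * x + (g * x0 - q) / α + b - zd =
      -g / 2 * x ^ 2 + (g * x0 - q) * x + ((g * x0 - q) / α + b - zd) := fun x => by ring
  simp only [hu, integral_sq_quadratic, intervalIntegral.integral_const, smul_eq_mul]
  field_simp
  ring

/-- Closed form of `(1/2)‖u_α - z_d‖²_{L²(Ω₁)}` on the rectangle, together with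
convergence of the coefficients `C_{iα} → C_i` as `α → ∞`. -/
theorem stmt_6 (x0 y0 g q b zd : ℝ) (hx0 : 0 < x0) (hy0 : 0 < y0)
    (uα : ℝ → ℝ → ℝ)
    (huα : uα = fun α x =>
      -g * x ^ 2 / 2 + (g * x0 - q) * x + (g * x0 - q) / α + b)
    (C1α C2α C3α C4α C5α C6α : ℝ → ℝ)
    (hC1 : C1α = fun α => 2 / 15 + 2 / (3 * α * x0) + 1 / (α ^ 2 * x0 ^ 2))
    (hC2 : C2α = fun α => 1 / 3 + 1 / (α * x0) + 1 / (α ^ 2 * x0 ^ 2))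
    (hC3 : C3α = fun _ => 1)
    (hC4 : C4α = fun α => -(5 / 12) - 5 / (3 * α * x0) - 2 / (α ^ 2 * x0 ^ 2))
    (hC5 : C5α = fun α => 2 / 3 + 2 / (α * x0))
    (hC6 : C6α = fun α => -1 - 2 / (α * x0)) :
    (∀ α : ℝ, 0 < α →
      (1 / 2) * (∫ _y in (0 : ℝ)..y0, ∫ x in (0 : ℝ)..x0, (uα α x - zd) ^ 2) =
        (y0 / 2) * (C1α α * g ^ 2 * x0 ^ 5 + C2α α * q ^ 2 * x0 ^ 3
          + C3α α * x0 * (b - zd) ^ 2 + C4α α * g * q * x0 ^ 4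
          + C5α α * g * x0 ^ 3 * (b - zd) + C6α α * q * x0 ^ 2 * (b - zd))) ∧
    Tendsto C1α atTop (nhds (2 / 15)) ∧
    Tendsto C2α atTop (nhds (1 / 3)) ∧
    Tendsto C3α atTop (nhds 1) ∧
    Tendsto C4α atTop (nhds (-(5 / 12))) ∧
    Tendsto C5α atTop (nhds (2 / 3)) ∧
    Tendsto C6α atTop (nhds (-1)) :=
  stmt_6_general x0 y0 g q b zd hx0 uα huα C1α C2α C3α C4α C5α C6α hC1 hC2 hC3 hC4 hC5 hC6
end

section
/- Let x0 > 0, y0 > 0, M₁ > 0, α > 0 and q, b, z_d ∈ ℝ. For g ∈ ℝ define u_g(x) = -g·x²/2 + (g·x0 - q)·x + b and the cost J₁(g) = (y0/2)·∫₀^{x0} (u_g(x) - z_d)² dx + (M₁/2)·g²·x0·y0. Then J₁ attains its minimum over ℝ at the unique point g_op = -(C₄·q·x0 + C₅·(b - z_d)) / (2·x0²·(C₁ + M₁/x0⁴)), where C₁ = 2/15, C₄ = -5/12, C₅ = 2/3. Similarly, with u_{α,g}(x) = u_g(x) + (g·x0 - q)/α and J₁α(g) = (y0/2)·∫₀^{x0}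 (u_{α,g}(x) - z_d)² dx + (M₁/2)·g²·x0·y0, the functional J₁α attains its minimum over ℝ at the unique point g_{α,op} = -(C₄α·q·x0 + C₅α·(b - z_d)) / (2·x0²·(C₁α + M₁/x0⁴)), where C₁α = 2/15 + 2/(3·α·x0) + 1/(α²·x0²), C₄α = -5/12 - 5/(3·α·x0) - 2/(α²·x0²), C₅α = 2/3 + 2/(α·x0). -/
/-! Both costs are quadratic polynomials in `g` whose leading coefficient is positive, so each has
a unique minimizer at its vertex. The coefficients come from integrating the squared quadratic
state explicitly over `[0, x0]`. -/

open intervalIntegral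

theorem integral_sq_quadratic_s7 (x0 a2 a1 a0 : ℝ) :
    ∫ x in (0 : ℝ)..x0, (a2 * x ^ 2 + a1 * x + a0) ^ 2
      = a2 ^ 2 * x0 ^ 5 / 5 + a2 * a1 * x0 ^ 4 / 2
        + (a1 ^ 2 + 2 * a2 * a0) * x0 ^ 3 / 3 + a1 * a0 * x0 ^ 2 + a0 ^ 2 * x0 := by
  have hderiv : ∀ x ∈ Set.uIcc (0 : ℝ) x0,
      HasDerivAt (fun x : ℝ => a2 ^ 2 * x ^ 5 / 5 + a2 * a1 * x ^ 4 / 2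
        + (a1 ^ 2 + 2 * a2 * a0) * x ^ 3 / 3 + a1 * a0 * x ^ 2 + a0 ^ 2 * x)
        ((a2 * x ^ 2 + a1 * x + a0) ^ 2) x := by
    intro x _
    convert (((((hasDerivAt_pow 5 x).const_mul (a2 ^ 2 / 5)).add
        ((hasDerivAt_pow 4 x).const_mul (a2 * a1 / 2))).add
        ((hasDerivAt_pow 3 x).const_mul ((a1 ^ 2 + 2 * a2 * a0) / 3))).add
        ((hasDerivAt_pow 2 x).const_mul (a1 * a0))).add
        ((hasDerivAt_id x).const_mul (a0 ^ 2)) using 1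
    · rfl
    · rfl
    · funext y; simp only [id, Pi.add_apply]; ring
    · push_cast; ring
  have hint : IntervalIntegrable (fun x : ℝ => (a2 * x ^ 2 + a1 * x + a0) ^ 2)
      MeasureTheory.volume 0 x0 :=
    (by fun_prop : Continuous _).intervalIntegrable 0 x0
  rw [integral_eq_sub_of_hasDerivAt hderiv hint]
  ring

theorem quadratic_unique_minimizer {A B C t : ℝ} (hA : 0 < A) (ht : 2 * A * t = -B) :
    (∀ g, A * t ^ 2 + B * t + C ≤ A * g ^ 2 + B * g + C) ∧
      ∀ g, g ≠ t → A * t ^ 2 + B * t + C < A * g ^ 2 + B * g + C := by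
  have hsq : ∀ g, A * g ^ 2 + B * g + C - (A * t ^ 2 + B * t + C) = A * (g - t) ^ 2 := by
    intro g
    rw [show B = -(2 * A * t) by linarith]
    ring
  refine ⟨fun g => ?_, fun g hg => ?_⟩
  · linarith [hsq g, mul_nonneg hA.le (sq_nonneg (g - t))]
  · linarith [hsq g, mul_pos hA (sq_pos_of_ne_zero (sub_ne_zero.mpr hg))]

section ControlCost

variable (x0 y0 M1 q b zd κ : ℝ)

/-- `κ = 0` gives the cost `J₁` of the Dirichlet–Neumann problem, `κ = 1 / α` the cost `J₁α` of
the Robin problem. -/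
noncomputable def controlCost (g : ℝ) : ℝ :=
  y0 / 2 * (∫ x in (0 : ℝ)..x0, (-g * x ^ 2 / 2 + (g * x0 - q) * x + (g * x0 - q) * κ + b - zd) ^ 2)
    + M1 / 2 * g ^ 2 * x0 * y0

noncomputable def optimalControl : ℝ :=
  -((-(5 / 12) - 5 * κ / (3 * x0) - 2 * κ ^ 2 / x0 ^ 2) * q * x0 + (2 / 3 + 2 * κ / x0) * (b - zd)) /
    (2 * x0 ^ 2 * (2 / 15 + 2 * κ / (3 * x0) + κ ^ 2 / x0 ^ 2 + M1 / x0 ^ 4))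

theorem controlCost_eq (g : ℝ) :
    controlCost x0 y0 M1 q b zd κ g
      = y0 / 2 * (2 / 15 * x0 ^ 5 + 2 / 3 * κ * x0 ^ 4 + κ ^ 2 * x0 ^ 3 + M1 * x0) * g ^ 2
        + y0 / 2 * (-(5 / 12) * q * x0 ^ 4 - 5 / 3 * κ * q * x0 ^ 3 - 2 * κ ^ 2 * q * x0 ^ 2
            + (b - zd) * (2 / 3 * x0 ^ 3 + 2 * κ * x0 ^ 2)) * g
        + y0 / 2 * (q ^ 2 * x0 ^ 3 / 3 + κ * q ^ 2 * x0 ^ 2 - q * (b - zd) * x0 ^ 2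
            + (b - zd - κ * q) ^ 2 * x0) := by
  have hstate : ∀ x, -g * x ^ 2 / 2 + (g * x0 - q) * x + (g * x0 - q) * κ + b - zd
      = (-g / 2) * x ^ 2 + (g * x0 - q) * x + ((g * x0 - q) * κ + (b - zd)) := fun x => by ring
  simp only [controlCost, hstate, integral_sq_quadratic_s7]
  ring

variable {x0 y0 M1}

theorem optimalControl_unique_minimizer (hx0 : 0 < x0) (hy0 : 0 < y0) (hM1 : 0 ≤ M1) :
    (∀ g, controlCost x0 y0 M1 q b zd κ (optimalControl x0 M1 q b zd κ)
        ≤ controlCost x0 y0 M1 q b zd κ g) ∧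
      ∀ g, g ≠ optimalControl x0 M1 q b zd κ →
        controlCost x0 y0 M1 q b zd κ (optimalControl x0 M1 q b zd κ)
          < controlCost x0 y0 M1 q b zd κ g := by
  have hx0' := hx0.ne'
  have hD : 0 < 2 / 15 + 2 * κ / (3 * x0) + κ ^ 2 / x0 ^ 2 + M1 / x0 ^ 4 := by
    rw [show 2 / 15 + 2 * κ / (3 * x0) + κ ^ 2 / x0 ^ 2 = (κ / x0 + 1 / 3) ^ 2 + 1 / 45 by
      field_simp; ring]
    positivity
  have hA : y0 / 2 * (2 / 15 * x0 ^ 5 + 2 / 3 * κ * x0 ^ 4 + κ ^ 2 * x0 ^ 3 + M1 * x0)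
      = y0 / 2 * x0 ^ 5 * (2 / 15 + 2 * κ / (3 * x0) + κ ^ 2 / x0 ^ 2 + M1 / x0 ^ 4) := by
    field_simp
  simp only [controlCost_eq, hA]
  refine quadratic_unique_minimizer (by positivity) ?_
  rw [optimalControl, mul_div_assoc', div_eq_iff (by positivity)]
  field_simp

end ControlCost

theorem stmt_7_general (x0 y0 M1 α q b zd : ℝ)
    (hx0 : 0 < x0) (hy0 : 0 < y0) (hM1 : 0 < M1)
    (J1 J1α : ℝ → ℝ) (gop gαop : ℝ)
    (hJ1 : J1 = fun g =>
      (y0 / 2) * (∫ x in (0 : ℝ)..x0,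
        ((-g * x ^ 2 / 2 + (g * x0 - q) * x + b) - zd) ^ 2)
      + M1 / 2 * g ^ 2 * x0 * y0)
    (hJ1α : J1α = fun g =>
      (y0 / 2) * (∫ x in (0 : ℝ)..x0,
        ((-g * x ^ 2 / 2 + (g * x0 - q) * x + (g * x0 - q) / α + b) - zd) ^ 2)
      + M1 / 2 * g ^ 2 * x0 * y0)
    (hgop : gop = -((-(5 / 12)) * q * x0 + (2 / 3) * (b - zd)) /
      (2 * x0 ^ 2 * (2 / 15 + M1 / x0 ^ 4)))
    (hgαop : gαop = -((-(5 / 12) - 5 / (3 * α * x0) - 2 / (α ^ 2 * x0 ^ 2)) * q * x0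
        + (2 / 3 + 2 / (α * x0)) * (b - zd)) /
      (2 * x0 ^ 2 * (2 / 15 + 2 / (3 * α * x0) + 1 / (α ^ 2 * x0 ^ 2) + M1 / x0 ^ 4))) :
    ((∀ g : ℝ, J1 gop ≤ J1 g) ∧ ∀ g : ℝ, g ≠ gop → J1 gop < J1 g) ∧
    ((∀ g : ℝ, J1α gαop ≤ J1α g) ∧ ∀ g : ℝ, g ≠ gαop → J1α gαop < J1α g) := by
  have hJ1 : J1 = controlCost x0 y0 M1 q b zd 0 := by
    rw [hJ1]; funext g; simp only [controlCost, mul_zero, add_zero]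
  have hgop : gop = optimalControl x0 M1 q b zd 0 := by
    rw [hgop, optimalControl]; ring
  have hJ1α : J1α = controlCost x0 y0 M1 q b zd α⁻¹ := by
    rw [hJ1α]; funext g; simp only [controlCost, div_eq_mul_inv (g * x0 - q) α]
  have hgαop : gαop = optimalControl x0 M1 q b zd α⁻¹ := by
    rw [hgαop, optimalControl]; ring
  subst hJ1 hgop hJ1α hgαop
  exact ⟨optimalControl_unique_minimizer q b zd 0 hx0 hy0 hM1.le,
    optimalControl_unique_minimizer q b zd α⁻¹ hx0 hy0 hM1.le⟩

/-- Distributed optimal control on the constant internal energy `g` on the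
rectangle: the cost functionals `J₁` and `J₁α` attain their minima over ℝ at the
unique points `g_op` and `g_{α,op}` given by the closed formulas. -/
theorem stmt_7 (x0 y0 M1 α q b zd : ℝ)
    (hx0 : 0 < x0) (hy0 : 0 < y0) (hM1 : 0 < M1) (hα : 0 < α)
    (J1 J1α : ℝ → ℝ) (gop gαop : ℝ)
    (hJ1 : J1 = fun g =>
      (y0 / 2) * (∫ x in (0 : ℝ)..x0,
        ((-g * x ^ 2 / 2 + (g * x0 - q) * x + b) - zd) ^ 2)
      + M1 / 2 * g ^ 2 * x0 * y0)
    (hJ1α : J1α = fun g =>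
      (y0 / 2) * (∫ x in (0 : ℝ)..x0,
        ((-g * x ^ 2 / 2 + (g * x0 - q) * x + (g * x0 - q) / α + b) - zd) ^ 2)
      + M1 / 2 * g ^ 2 * x0 * y0)
    (hgop : gop = -((-(5 / 12)) * q * x0 + (2 / 3) * (b - zd)) /
      (2 * x0 ^ 2 * (2 / 15 + M1 / x0 ^ 4)))
    (hgαop : gαop = -((-(5 / 12) - 5 / (3 * α * x0) - 2 / (α ^ 2 * x0 ^ 2)) * q * x0
        + (2 / 3 + 2 / (α * x0)) * (b - zd)) /
      (2 * x0 ^ 2 * (2 / 15 + 2 / (3 * α * x0) + 1 / (α ^ 2 * x0 ^ 2) + M1 / x0 ^ 4))) :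
    ((∀ g : ℝ, J1 gop ≤ J1 g) ∧ ∀ g : ℝ, g ≠ gop → J1 gop < J1 g) ∧
    ((∀ g : ℝ, J1α gαop ≤ J1α g) ∧ ∀ g : ℝ, g ≠ gαop → J1α gαop < J1α g) :=
  stmt_7_general x0 y0 M1 α q b zd hx0 hy0 hM1 J1 J1α gop gαop hJ1 hJ1α hgop hgαop
end

section
/- Let x0 > 0, y0 > 0, M₂ > 0, α > 0 and g, b, z_d ∈ ℝ. For q ∈ ℝ define u_q(x) = -g·x²/2 + (g·x0 - q)·x + b and the cost J₂(q) = (y0/2)·∫₀^{x0} (u_q(x) - z_d)² dx + (M₂/2)·q²·y0. Then J₂ attains its minimum over ℝ at the unique point q_op = -(C₄·g·x0² + C₆·(b - z_d)) / (2·x0·(C₂ + M₂/x0³)), where C₂ = 1/3, C₄ = -5/12, C₆ = -1. Similarly, with u_{α,q}(x) = u_q(x) + (g·x0 - q)/α and J₂α(q) = (y0/2)·∫₀^{x0} (u_{α,q}(x) - z_d)² dx + (M₂/2)·q²·y0, the functional J₂α attains its minimum over ℝ at the unique point q_{α,op} = -(C₄α·g·x0² + C₆α·(b - z_d)) / (2·x0·(C₂α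 + M₂/x0³)), where C₂α = 1/3 + 1/(α·x0) + 1/(α²·x0²), C₄α = -5/12 - 5/(3·α·x0) - 2/(α²·x0²), C₆α = -1 - 2/(α·x0). -/
/-!
Both costs are instances of `J(q) = (y0/2) ∫₀^{x0} (-g x²/2 + (g x0 - q)(x + κ) + b - zd)² dx
+ (M₂/2) q² y0`, with `κ = 0` for the Dirichlet–Neumann problem and `κ = 1/α` for the Robin
problem. Integrating the square of the quadratic polynomial in `x` exhibits `J` as a quadratic
polynomial in `q` with leading coefficient `(y0/2)(x0³/3 + κ x0² + κ² x0 + M₂) > 0`, so `J` has a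
unique minimiser, its vertex, which is the closed formula of the statement.
-/

open intervalIntegral

theorem integral_quadratic_sq (A2 A1 A0 X : ℝ) :
    ∫ x in (0 : ℝ)..X, (A2 * x ^ 2 + A1 * x + A0) ^ 2
      = A2 ^ 2 * X ^ 5 / 5 + A2 * A1 * X ^ 4 / 2 + (A1 ^ 2 + 2 * A2 * A0) * X ^ 3 / 3
        + A1 * A0 * X ^ 2 + A0 ^ 2 * X := by
  have hexpand : ∀ x : ℝ, (A2 * x ^ 2 + A1 * x + A0) ^ 2
      = A2 ^ 2 * x ^ 4 + 2 * A2 * A1 * x ^ 3 + (A1 ^ 2 + 2 * A2 * A0) * x ^ 2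
        + 2 * A1 * A0 * x ^ 1 + A0 ^ 2 * x ^ 0 := fun x => by ring
  simp only [hexpand]
  rw [integral_add, integral_add, integral_add, integral_add]
  · simp only [integral_const_mul, integral_pow]
    ring
  all_goals exact (by fun_prop : Continuous _).intervalIntegrable _ _

theorem quadratic_isUniqueMin {f : ℝ → ℝ} {a β q₀ : ℝ} (ha : 0 < a)
    (hf : ∀ q, f q = a * q ^ 2 + β * q + f 0) (hvertex : 2 * a * q₀ + β = 0) :
    (∀ q, f q₀ ≤ f q) ∧ ∀ q, q ≠ q₀ → f q₀ < f q := by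
  have hsub : ∀ q, f q - f q₀ = a * (q - q₀) ^ 2 := fun q => by
    rw [hf q, hf q₀]
    linear_combination (q - q₀) * hvertex
  refine ⟨fun q => ?_, fun q hq => ?_⟩
  · linarith [hsub q, mul_nonneg ha.le (sq_nonneg (q - q₀))]
  · linarith [hsub q, mul_pos ha (sq_pos_of_ne_zero (sub_ne_zero.mpr hq))]

namespace FluxControl

variable (x0 y0 M2 g b zd κ : ℝ)

noncomputable def cost (q : ℝ) : ℝ :=
  (y0 / 2) * (∫ x in (0 : ℝ)..x0, (-g * x ^ 2 / 2 + (g * x0 - q) * (x + κ) + b - zd) ^ 2)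
    + M2 / 2 * q ^ 2 * y0

noncomputable def optimalFlux : ℝ :=
  -((-(5 / 12) - 5 * κ / (3 * x0) - 2 * κ ^ 2 / x0 ^ 2) * g * x0 ^ 2
      + (-1 - 2 * κ / x0) * (b - zd)) /
    (2 * x0 * (1 / 3 + κ / x0 + κ ^ 2 / x0 ^ 2 + M2 / x0 ^ 3))

theorem cost_eq_quadratic (q : ℝ) :
    cost x0 y0 M2 g b zd κ q
      = y0 / 2 * (x0 ^ 3 / 3 + κ * x0 ^ 2 + κ ^ 2 * x0 + M2) * q ^ 2
        + y0 / 2 * (-(5 / 12) * g * x0 ^ 4 - 5 / 3 * g * κ * x0 ^ 3 - 2 * g * κ ^ 2 * x0 ^ 2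
            - (b - zd) * (x0 ^ 2 + 2 * κ * x0)) * q
        + cost x0 y0 M2 g b zd κ 0 := by
  have hintegrand : ∀ q x : ℝ, -g * x ^ 2 / 2 + (g * x0 - q) * (x + κ) + b - zd
      = (-g / 2) * x ^ 2 + (g * x0 - q) * x + ((g * x0 - q) * κ + (b - zd)) := fun _ _ => by ring
  simp only [cost, hintegrand, integral_quadratic_sq]
  ring

theorem cost_isUniqueMin (hx0 : 0 < x0) (hy0 : 0 < y0) (hM2 : 0 ≤ M2) :
    (∀ q, cost x0 y0 M2 g b zd κ (optimalFlux x0 M2 g b zd κ) ≤ cost x0 y0 M2 g b zd κ q) ∧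
      ∀ q, q ≠ optimalFlux x0 M2 g b zd κ →
        cost x0 y0 M2 g b zd κ (optimalFlux x0 M2 g b zd κ) < cost x0 y0 M2 g b zd κ q := by
  -- `x0³/3 + κ x0² + κ² x0 = x0 ((κ + x0/2)² + x0²/12)`, positive whatever the sign of `κ`
  have hlead : 0 < x0 ^ 3 / 3 + κ * x0 ^ 2 + κ ^ 2 * x0 + M2 := by
    nlinarith [mul_pos hx0 (pow_pos hx0 2), mul_nonneg hx0.le (sq_nonneg (κ + x0 / 2))]
  refine quadratic_isUniqueMin ?_ (cost_eq_quadratic x0 y0 M2 g b zd κ) ?_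
  · positivity
  have hden : 2 * x0 * (1 / 3 + κ / x0 + κ ^ 2 / x0 ^ 2 + M2 / x0 ^ 3)
      = 2 * (x0 ^ 3 / 3 + κ * x0 ^ 2 + κ ^ 2 * x0 + M2) / x0 ^ 2 := by
    field_simp
  rw [optimalFlux, hden]
  -- kept atomic so that `field_simp` cancels it using `hlead`
  set L := x0 ^ 3 / 3 + κ * x0 ^ 2 + κ ^ 2 * x0 + M2
  field_simp
  ring

end FluxControl

open FluxControl in
theorem stmt_8_general (x0 y0 M2 α g b zd : ℝ)
    (hx0 : 0 < x0) (hy0 : 0 < y0) (hM2 : 0 < M2)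
    (J2 J2α : ℝ → ℝ) (qop qαop : ℝ)
    (hJ2 : J2 = fun q =>
      (y0 / 2) * (∫ x in (0 : ℝ)..x0,
        ((-g * x ^ 2 / 2 + (g * x0 - q) * x + b) - zd) ^ 2)
      + M2 / 2 * q ^ 2 * y0)
    (hJ2α : J2α = fun q =>
      (y0 / 2) * (∫ x in (0 : ℝ)..x0,
        ((-g * x ^ 2 / 2 + (g * x0 - q) * x + (g * x0 - q) / α + b) - zd) ^ 2)
      + M2 / 2 * q ^ 2 * y0)
    (hqop : qop = -((-(5 / 12)) * g * x0 ^ 2 + (-1) * (b - zd)) /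
      (2 * x0 * (1 / 3 + M2 / x0 ^ 3)))
    (hqαop : qαop = -((-(5 / 12) - 5 / (3 * α * x0) - 2 / (α ^ 2 * x0 ^ 2)) * g * x0 ^ 2
        + (-1 - 2 / (α * x0)) * (b - zd)) /
      (2 * x0 * (1 / 3 + 1 / (α * x0) + 1 / (α ^ 2 * x0 ^ 2) + M2 / x0 ^ 3))) :
    ((∀ q : ℝ, J2 qop ≤ J2 q) ∧ ∀ q : ℝ, q ≠ qop → J2 qop < J2 q) ∧
    ((∀ q : ℝ, J2α qαop ≤ J2α q) ∧ ∀ q : ℝ, q ≠ qαop → J2α qαop < J2α q) := by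
  have hJ2_eq : J2 = cost x0 y0 M2 g b zd 0 := by
    funext q
    simp only [hJ2, cost]
    congr 2
    exact integral_congr fun x _ => by ring
  have hJ2α_eq : J2α = cost x0 y0 M2 g b zd α⁻¹ := by
    funext q
    simp only [hJ2α, cost]
    congr 2
    exact integral_congr fun x _ => by ring
  have hqop_eq : qop = optimalFlux x0 M2 g b zd 0 := by
    rw [hqop, optimalFlux]
    ring
  have hqαop_eq : qαop = optimalFlux x0 M2 g b zd α⁻¹ := by
    rw [hqαop, optimalFlux]
    ring
  rw [hJ2_eq, hJ2α_eq, hqop_eq, hqαop_eq]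
  exact ⟨cost_isUniqueMin x0 y0 M2 g b zd 0 hx0 hy0 hM2.le,
    cost_isUniqueMin x0 y0 M2 g b zd α⁻¹ hx0 hy0 hM2.le⟩

/-- Boundary optimal control on the constant heat flux `q` on `Γ₂` for the
rectangle: the cost functionals `J₂` and `J₂α` attain their minima over ℝ at the
unique points `q_op` and `q_{α,op}` given by the closed formulas. -/
theorem stmt_8 (x0 y0 M2 α g b zd : ℝ)
    (hx0 : 0 < x0) (hy0 : 0 < y0) (hM2 : 0 < M2) (hα : 0 < α)
    (J2 J2α : ℝ → ℝ) (qop qαop : ℝ)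
    (hJ2 : J2 = fun q =>
      (y0 / 2) * (∫ x in (0 : ℝ)..x0,
        ((-g * x ^ 2 / 2 + (g * x0 - q) * x + b) - zd) ^ 2)
      + M2 / 2 * q ^ 2 * y0)
    (hJ2α : J2α = fun q =>
      (y0 / 2) * (∫ x in (0 : ℝ)..x0,
        ((-g * x ^ 2 / 2 + (g * x0 - q) * x + (g * x0 - q) / α + b) - zd) ^ 2)
      + M2 / 2 * q ^ 2 * y0)
    (hqop : qop = -((-(5 / 12)) * g * x0 ^ 2 + (-1) * (b - zd)) /
      (2 * x0 * (1 / 3 + M2 / x0 ^ 3)))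
    (hqαop : qαop = -((-(5 / 12) - 5 / (3 * α * x0) - 2 / (α ^ 2 * x0 ^ 2)) * g * x0 ^ 2
        + (-1 - 2 / (α * x0)) * (b - zd)) /
      (2 * x0 * (1 / 3 + 1 / (α * x0) + 1 / (α ^ 2 * x0 ^ 2) + M2 / x0 ^ 3))) :
    ((∀ q : ℝ, J2 qop ≤ J2 q) ∧ ∀ q : ℝ, q ≠ qop → J2 qop < J2 q) ∧
    ((∀ q : ℝ, J2α qαop ≤ J2α q) ∧ ∀ q : ℝ, q ≠ qαop → J2α qαop < J2α q) :=
  stmt_8_general x0 y0 M2 α g b zd hx0 hy0 hM2 J2 J2α qop qαop hJ2 hJ2α hqop hqαop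
end

section
/- Let x0 > 0, y0 > 0, M₃ > 0, α > 0 and g, q, z_d ∈ ℝ. For b ∈ ℝ define u_b(x) = -g·x²/2 + (g·x0 - q)·x + b and the cost J₃(b) = (y0/2)·∫₀^{x0} (u_b(x) - z_d)² dx + (M₃/2)·b²·y0. Then J₃ attains its minimum over ℝ at the unique point b_op = -(C₅·g·x0² + C₆·q·x0 - 2·C₃·z_d) / (2·(C₃ + M₃/x0)), where C₃ = 1, C₅ = 2/3, C₆ = -1. Similarly, with u_{α,b}(x) = u_b(x) + (g·x0 - q)/α and J₃α(b) = (y0/2)·∫₀^{x0} (u_{α,b}(x) - z_d)² dx + (M₃/2)·b²·y0, the functional J₃α attains its minimum over ℝ at the unique point b_{α,op} = -(C₅α·g·x0² + C₆α·q·x0 - 2·C₃α·z_d) / (2·(C₃α + M₃/x0)), where C₃α = 1, C₅α = 2/3 + 2/(α·x0), C₆α = -1 - 2/(α·x0). -/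
/-!
Adding the constant `b` to the state only shifts it, so `∫ (f + b)² = ∫ f² + 2b ∫ f + b² x0`
and each cost is the quadratic `(y0/2)(x0 + M₃) b² + y0 b ∫ f + const` in `b`, where `f` is the
state at `b = 0` minus `z_d`. Its unique minimiser is `-(∫ f) / (x0 + M₃)`, and integrating the
polynomial `f` turns this into the closed formulas for `b_op` and `b_{α,op}`.
-/

open intervalIntegral
open MeasureTheory (volume)

theorem forall_le_and_forall_ne_lt_of_eq_sq {F : ℝ → ℝ} {K m : ℝ} (hK : 0 < K)
    (hF : ∀ b, F b = K * (b - m) ^ 2 + F m) :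
    (∀ b, F m ≤ F b) ∧ ∀ b, b ≠ m → F m < F b := by
  refine ⟨fun b => ?_, fun b hb => ?_⟩
  · rw [hF b]
    have := mul_nonneg hK.le (sq_nonneg (b - m))
    linarith
  · rw [hF b]
    have := mul_pos hK (sq_pos_of_ne_zero (sub_ne_zero.mpr hb))
    linarith

theorem integral_quadratic (a c d x0 : ℝ) :
    ∫ x in (0 : ℝ)..x0, (a * x ^ 2 + c * x + d) = a * x0 ^ 3 / 3 + c * x0 ^ 2 / 2 + d * x0 := by
  rw [integral_add (Continuous.intervalIntegrable (by fun_prop) _ _) intervalIntegrable_const,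
    integral_add (Continuous.intervalIntegrable (by fun_prop) _ _)
      (Continuous.intervalIntegrable (by fun_prop) _ _),
    integral_const_mul, integral_const_mul, integral_pow, integral_id, integral_const, smul_eq_mul]
  ring

noncomputable def shiftCost (x0 y0 M : ℝ) (f : ℝ → ℝ) (b : ℝ) : ℝ :=
  y0 / 2 * (∫ x in (0 : ℝ)..x0, (f x + b) ^ 2) + M / 2 * b ^ 2 * y0

theorem integral_add_const_sq {f : ℝ → ℝ} {a b : ℝ} (hf : IntervalIntegrable f volume a b)
    (hf2 : IntervalIntegrable (fun x => f x ^ 2) volume a b) (c : ℝ) :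
    ∫ x in a..b, (f x + c) ^ 2
      = (∫ x in a..b, f x ^ 2) + 2 * c * (∫ x in a..b, f x) + c ^ 2 * (b - a) := by
  have hexp : (fun x => (f x + c) ^ 2) = fun x => (f x ^ 2 + 2 * c * f x) + c ^ 2 := by
    funext x; ring
  rw [hexp, integral_add (hf2.add (hf.const_mul _)) intervalIntegrable_const,
    integral_add hf2 (hf.const_mul _), integral_const_mul, integral_const, smul_eq_mul]
  ring

theorem shiftCost_eq_sq {f : ℝ → ℝ} {x0 y0 M : ℝ} (hf : IntervalIntegrable f volume 0 x0)
    (hf2 : IntervalIntegrable (fun x => f x ^ 2) volume 0 x0) (hxM : x0 + M ≠ 0) (b : ℝ) :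
    shiftCost x0 y0 M f b
      = y0 / 2 * (x0 + M) * (b - -(∫ x in (0 : ℝ)..x0, f x) / (x0 + M)) ^ 2
        + shiftCost x0 y0 M f (-(∫ x in (0 : ℝ)..x0, f x) / (x0 + M)) := by
  simp only [shiftCost, integral_add_const_sq hf hf2]
  field_simp
  ring

theorem shiftCost_isUniqueMin {f : ℝ → ℝ} {x0 y0 M : ℝ} (hf : Continuous f) (hy0 : 0 < y0)
    (hxM : 0 < x0 + M) :
    let m := -(∫ x in (0 : ℝ)..x0, f x) / (x0 + M)
    (∀ b, shiftCost x0 y0 M f m ≤ shiftCost x0 y0 M f b) ∧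
      ∀ b, b ≠ m → shiftCost x0 y0 M f m < shiftCost x0 y0 M f b :=
  forall_le_and_forall_ne_lt_of_eq_sq (by positivity)
    (shiftCost_eq_sq (hf.intervalIntegrable _ _) ((hf.pow 2).intervalIntegrable _ _) hxM.ne')

theorem shiftCost_quadratic_isUniqueMin {x0 y0 M : ℝ} (a c d : ℝ) (hy0 : 0 < y0)
    (hxM : 0 < x0 + M) :
    let m := -(a * x0 ^ 3 / 3 + c * x0 ^ 2 / 2 + d * x0) / (x0 + M)
    let F := shiftCost x0 y0 M fun x => a * x ^ 2 + c * x + d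
    (∀ b, F m ≤ F b) ∧ ∀ b, b ≠ m → F m < F b := by
  have h := shiftCost_isUniqueMin (f := fun x => a * x ^ 2 + c * x + d) (by fun_prop) hy0 hxM
  rwa [integral_quadratic] at h

/-- Boundary optimal control on the constant temperature `b` for the rectangle:
the cost functionals `J₃` and `J₃α` attain their minima over ℝ at the unique
points `b_op` and `b_{α,op}` given by the closed formulas. -/
theorem stmt_9 (x0 y0 M3 α g q zd : ℝ)
    (hx0 : 0 < x0) (hy0 : 0 < y0) (hM3 : 0 < M3) (hα : 0 < α)
    (J3 J3α : ℝ → ℝ) (bop bαop : ℝ)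
    (hJ3 : J3 = fun b =>
      (y0 / 2) * (∫ x in (0 : ℝ)..x0,
        ((-g * x ^ 2 / 2 + (g * x0 - q) * x + b) - zd) ^ 2)
      + M3 / 2 * b ^ 2 * y0)
    (hJ3α : J3α = fun b =>
      (y0 / 2) * (∫ x in (0 : ℝ)..x0,
        ((-g * x ^ 2 / 2 + (g * x0 - q) * x + (g * x0 - q) / α + b) - zd) ^ 2)
      + M3 / 2 * b ^ 2 * y0)
    (hbop : bop = -((2 / 3) * g * x0 ^ 2 + (-1) * q * x0 - 2 * 1 * zd) /
      (2 * (1 + M3 / x0)))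
    (hbαop : bαop = -((2 / 3 + 2 / (α * x0)) * g * x0 ^ 2
        + (-1 - 2 / (α * x0)) * q * x0 - 2 * 1 * zd) /
      (2 * (1 + M3 / x0))) :
    ((∀ b : ℝ, J3 bop ≤ J3 b) ∧ ∀ b : ℝ, b ≠ bop → J3 bop < J3 b) ∧
    ((∀ b : ℝ, J3α bαop ≤ J3α b) ∧ ∀ b : ℝ, b ≠ bαop → J3α bαop < J3α b) := by
  have hxM : 0 < x0 + M3 := by positivity
  have hJ3' : J3 = shiftCost x0 y0 M3 fun x => -g / 2 * x ^ 2 + (g * x0 - q) * x + -zd := by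
    rw [hJ3]; funext b; unfold shiftCost; congr 2; congr 1; funext x; ring
  have hJ3α' : J3α = shiftCost x0 y0 M3
      fun x => -g / 2 * x ^ 2 + (g * x0 - q) * x + ((g * x0 - q) / α - zd) := by
    rw [hJ3α]; funext b; unfold shiftCost; congr 2; congr 1; funext x; ring
  have hbop' : bop = -(-g / 2 * x0 ^ 3 / 3 + (g * x0 - q) * x0 ^ 2 / 2 + -zd * x0) / (x0 + M3) := by
    rw [hbop]; field_simp; ring
  have hbαop' : bαop = -(-g / 2 * x0 ^ 3 / 3 + (g * x0 - q) * x0 ^ 2 / 2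
      + ((g * x0 - q) / α - zd) * x0) / (x0 + M3) := by
    rw [hbαop]; field_simp; ring
  rw [hJ3', hJ3α', hbop', hbαop']
  exact ⟨shiftCost_quadratic_isUniqueMin _ _ _ hy0 hxM,
    shiftCost_quadratic_isUniqueMin _ _ _ hy0 hxM⟩
end

section
/- Let x0 > 0, y0 > 0, M₄ > 0, M₅ > 0, α > 0 and b, z_d ∈ ℝ. For (g,q) ∈ ℝ² define u_{(g,q)}(x) = -g·x²/2 + (g·x0 - q)·x + b and the cost J₄(g,q) = (y0/2)·∫₀^{x0} (u_{(g,q)}(x) - z_d)² dx + (M₄/2)·g²·x0·y0 + (M₅/2)·q²·y0. Then J₄ attains its minimum over ℝ² at the unique point (g^op, q^op) = ( (b - z_d)·Δ₁/x0² , (b - z_d)·Π₁/x0 ), where, with C₁ = 2/15, C₂ = 1/3, C₄ = -5/12, C₅ = 2/3, C₆ = -1: Δ₁ = (C₄·C₆ - 2·C₅·(C₂ + M₅/x0³)) / (4·(C₁ + M₄/x0⁴)·(C₂ + M₅/x0³) - C₄²) and Π₁ = (C₄·C₅ - 2·C₆·(C₁ + M₄/x0⁴)) / (4·(C₁ + M₄/x0⁴)·(C₂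 + M₅/x0³) - C₄²). The analogous statement holds for J₄α built from u_{α,(g,q)}(x) = u_{(g,q)}(x) + (g·x0 - q)/α: its unique minimizer is (g_α^op, q_α^op) = ( (b - z_d)·Δ₁α/x0² , (b - z_d)·Π₁α/x0 ) where Δ₁α, Π₁α are obtained from Δ₁, Π₁ by replacing C_i by C_{iα}, with C₁α = 2/15 + 2/(3·α·x0) + 1/(α²·x0²), C₂α = 1/3 + 1/(α·x0) + 1/(α²·x0²), C₄α = -5/12 - 5/(3·α·x0) - 2/(α²·x0²), C₅α = 2/3 + 2/(α·x0), C₆α = -1 - 2/(α·x0). -/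
/-!
Both costs are quadratic polynomials in `(g, q)`. In the variables `G = g x0²`, `Q = q x0` and after
division by `y0 x0 / 2` their coefficients are the constants `Cᵢ` of the paper evaluated at
`s = 1 / (α x0)` (at `s = 0` for the problem `S`), with `M₄ / x0⁴` and `M₅ / x0³` added on the
diagonal. This quadratic form is positive definite for every real `s`, so the unique minimiser is the
stationary point, which Cramer's rule gives as `(G, Q) = (b - z_d) (Δ₁, Π₁)`.
-/

open intervalIntegral

def IsStrictMinimizer (f : ℝ → ℝ → ℝ) (u₀ v₀ : ℝ) : Prop :=
  ∀ u v, (u, v) ≠ (u₀, v₀) → f u₀ v₀ < f u v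

namespace IsStrictMinimizer

variable {f : ℝ → ℝ → ℝ} {u₀ v₀ : ℝ}

theorem le (h : IsStrictMinimizer f u₀ v₀) (u v : ℝ) : f u₀ v₀ ≤ f u v := by
  by_cases huv : (u, v) = (u₀, v₀)
  · obtain ⟨rfl, rfl⟩ := Prod.mk.inj huv
    rfl
  · exact (h u v huv).le

theorem comp_mul_add (h : IsStrictMinimizer f u₀ v₀) {k l m : ℝ} (hk : 0 < k) (hl : l ≠ 0)
    (hm : m ≠ 0) (e : ℝ) :
    IsStrictMinimizer (fun u v => k * f (l * u) (m * v) + e) (u₀ / l) (v₀ / m) := by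
  intro u v huv
  have hne : (l * u, m * v) ≠ (u₀, v₀) := fun heq => by
    obtain ⟨hu, hv⟩ := Prod.mk.inj heq
    exact huv (by rw [← hu, ← hv, mul_div_cancel_left₀ u hl, mul_div_cancel_left₀ v hm])
  simp only [mul_div_cancel₀ u₀ hl, mul_div_cancel₀ v₀ hm]
  gcongr
  exact h _ _ hne

end IsStrictMinimizer

section QuadraticForm

variable {a b c : ℝ}

theorem quadForm_pos (ha : 0 < a) (hdisc : 0 < 4 * a * c - b ^ 2) {u v : ℝ}
    (huv : (u, v) ≠ (0, 0)) : 0 < a * u ^ 2 + b * u * v + c * v ^ 2 := by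
  have hsq : 4 * a * (a * u ^ 2 + b * u * v + c * v ^ 2)
      = (2 * a * u + b * v) ^ 2 + (4 * a * c - b ^ 2) * v ^ 2 := by ring
  rcases eq_or_ne v 0 with rfl | hv
  · have hu : u ≠ 0 := fun hu => huv (by rw [hu])
    have : 0 < a * u ^ 2 := by positivity
    linarith
  · have : 0 < 4 * a * (a * u ^ 2 + b * u * v + c * v ^ 2) := by rw [hsq]; positivity
    exact pos_of_mul_pos_right this (by positivity)

def quadPoly (a b c d e u v : ℝ) : ℝ := a * u ^ 2 + b * u * v + c * v ^ 2 + d * u + e * v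

/-- The stationary point of `quadPoly a b c d e`, by Cramer's rule. -/
noncomputable def quadArgmin (a b c d e : ℝ) : ℝ × ℝ :=
  ((b * e - 2 * c * d) / (4 * a * c - b ^ 2), (b * d - 2 * a * e) / (4 * a * c - b ^ 2))

theorem isStrictMinimizer_quadratic (ha : 0 < a) (hdisc : 0 < 4 * a * c - b ^ 2) (d e : ℝ) :
    IsStrictMinimizer (quadPoly a b c d e)
      (quadArgmin a b c d e).1 (quadArgmin a b c d e).2 := by
  set u₀ := (quadArgmin a b c d e).1 with hu₀
  set v₀ := (quadArgmin a b c d e).2 with hv₀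
  have hstat₁ : 2 * a * u₀ + b * v₀ + d = 0 := by
    apply mul_left_cancel₀ hdisc.ne'
    simp only [hu₀, hv₀, quadArgmin]
    field_simp
    ring
  have hstat₂ : b * u₀ + 2 * c * v₀ + e = 0 := by
    apply mul_left_cancel₀ hdisc.ne'
    simp only [hu₀, hv₀, quadArgmin]
    field_simp
    ring
  intro u v huv
  have hshift : (u - u₀, v - v₀) ≠ (0, 0) := fun heq => by
    obtain ⟨hu, hv⟩ := Prod.mk.inj heq
    exact huv (by rw [sub_eq_zero.1 hu, sub_eq_zero.1 hv])
  have hpos := quadForm_pos ha hdisc hshift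
  unfold quadPoly
  linear_combination hpos - (u - u₀) * hstat₁ - (v - v₀) * hstat₂

end QuadraticForm

theorem integral_sq_quadratic_s10 (p₂ p₁ p₀ T : ℝ) :
    ∫ x in (0 : ℝ)..T, (p₂ * x ^ 2 + p₁ * x + p₀) ^ 2
      = p₂ ^ 2 * T ^ 5 / 5 + p₂ * p₁ * T ^ 4 / 2 + (p₁ ^ 2 + 2 * p₂ * p₀) * T ^ 3 / 3
        + p₁ * p₀ * T ^ 2 + p₀ ^ 2 * T := by
  have hderiv : ∀ x : ℝ, HasDerivAt
      (fun y => p₂ ^ 2 / 5 * y ^ 5 + p₂ * p₁ / 2 * y ^ 4 + (p₁ ^ 2 + 2 * p₂ * p₀) / 3 * y ^ 3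
        + p₁ * p₀ * y ^ 2 + p₀ ^ 2 * y ^ 1)
      ((p₂ * x ^ 2 + p₁ * x + p₀) ^ 2) x := fun x =>
    (((((hasDerivAt_pow 5 x).const_mul _).add ((hasDerivAt_pow 4 x).const_mul _)).add
      ((hasDerivAt_pow 3 x).const_mul _)).add ((hasDerivAt_pow 2 x).const_mul _)).add
      ((hasDerivAt_pow 1 x).const_mul _) |>.congr_deriv (by push_cast; ring)
  rw [integral_eq_sub_of_hasDerivAt (fun x _ => hderiv x)
    ((Continuous.intervalIntegrable (by fun_prop) _ _))]
  ring

namespace RectangleControl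

-- The paper's constants `C₁, C₂, C₄, C₅, C₆` as functions of `s = 1 / (α x0)`.

noncomputable def C₁ (s : ℝ) : ℝ := 2 / 15 + 2 * s / 3 + s ^ 2

noncomputable def C₂ (s : ℝ) : ℝ := 1 / 3 + s + s ^ 2

noncomputable def C₄ (s : ℝ) : ℝ := -(5 / 12) - 5 * s / 3 - 2 * s ^ 2

noncomputable def C₅ (s : ℝ) : ℝ := 2 / 3 + 2 * s

noncomputable def C₆ (s : ℝ) : ℝ := -1 - 2 * s

theorem C₁_pos (s : ℝ) : 0 < C₁ s := by
  unfold C₁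
  nlinarith [sq_nonneg (s + 1 / 3)]

theorem C₂_pos (s : ℝ) : 0 < C₂ s := by
  unfold C₂
  nlinarith [sq_nonneg (s + 1 / 2)]

theorem discriminant_pos {m₄ m₅ : ℝ} (hm₄ : 0 ≤ m₄) (hm₅ : 0 ≤ m₅) (s : ℝ) :
    0 < 4 * (C₁ s + m₄) * (C₂ s + m₅) - C₄ s ^ 2 := by
  have hdisc : 4 * C₁ s * C₂ s - C₄ s ^ 2 = 4 / 45 * (s + 3 / 16) ^ 2 + 1 / 960 := by
    unfold C₁ C₂ C₄
    ring
  nlinarith [C₁_pos s, C₂_pos s, mul_nonneg hm₄ hm₅, sq_nonneg (s + 3 / 16)]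

/-- `κ = 1 / α` gives `J₄α` and `κ = 0` gives `J₄`. -/
noncomputable def cost (x0 y0 M4 M5 κ b zd g q : ℝ) : ℝ :=
  (y0 / 2) * (∫ x in (0 : ℝ)..x0,
    ((-g * x ^ 2 / 2 + (g * x0 - q) * x + κ * (g * x0 - q) + b) - zd) ^ 2)
  + M4 / 2 * g ^ 2 * x0 * y0 + M5 / 2 * q ^ 2 * y0

theorem cost_eq {x0 : ℝ} (hx0 : x0 ≠ 0) (y0 M4 M5 κ b zd g q : ℝ) :
    cost x0 y0 M4 M5 κ b zd g q
      = y0 * x0 / 2 * quadPoly (C₁ (κ / x0) + M4 / x0 ^ 4) (C₄ (κ / x0))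
          (C₂ (κ / x0) + M5 / x0 ^ 3) ((b - zd) * C₅ (κ / x0)) ((b - zd) * C₆ (κ / x0))
          (x0 ^ 2 * g) (x0 * q)
        + y0 * x0 / 2 * (b - zd) ^ 2 := by
  have hintegrand : ∫ x in (0 : ℝ)..x0,
      ((-g * x ^ 2 / 2 + (g * x0 - q) * x + κ * (g * x0 - q) + b) - zd) ^ 2
      = ∫ x in (0 : ℝ)..x0, ((-g / 2) * x ^ 2 + (g * x0 - q) * x + (κ * (g * x0 - q) + (b - zd))) ^ 2 :=
    integral_congr fun x _ => by ring
  rw [cost, hintegrand, integral_sq_quadratic_s10]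
  unfold quadPoly C₁ C₂ C₄ C₅ C₆
  field_simp
  ring

theorem isStrictMinimizer_cost {x0 y0 M4 M5 : ℝ} (hx0 : 0 < x0) (hy0 : 0 < y0) (hM4 : 0 ≤ M4)
    (hM5 : 0 ≤ M5) (κ b zd : ℝ) :
    IsStrictMinimizer (cost x0 y0 M4 M5 κ b zd)
      ((b - zd) / x0 ^ 2 * (quadArgmin (C₁ (κ / x0) + M4 / x0 ^ 4) (C₄ (κ / x0))
        (C₂ (κ / x0) + M5 / x0 ^ 3) (C₅ (κ / x0)) (C₆ (κ / x0))).1)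
      ((b - zd) / x0 * (quadArgmin (C₁ (κ / x0) + M4 / x0 ^ 4) (C₄ (κ / x0))
        (C₂ (κ / x0) + M5 / x0 ^ 3) (C₅ (κ / x0)) (C₆ (κ / x0))).2) := by
  have hm₄ : 0 ≤ M4 / x0 ^ 4 := by positivity
  have hm₅ : 0 ≤ M5 / x0 ^ 3 := by positivity
  have hquad := isStrictMinimizer_quadratic (add_pos_of_pos_of_nonneg (C₁_pos (κ / x0)) hm₄)
    (discriminant_pos hm₄ hm₅ (κ / x0))
    ((b - zd) * C₅ (κ / x0)) ((b - zd) * C₆ (κ / x0))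
  have hscaled := hquad.comp_mul_add (k := y0 * x0 / 2) (l := x0 ^ 2) (m := x0) (by positivity)
    (by positivity) hx0.ne' (y0 * x0 / 2 * (b - zd) ^ 2)
  convert hscaled using 1
  · exact funext₂ (cost_eq hx0.ne' y0 M4 M5 κ b zd)
  all_goals simp only [quadArgmin]; ring

end RectangleControl

theorem stmt_10_general (x0 y0 M4 M5 α b zd : ℝ)
    (hx0 : 0 < x0) (hy0 : 0 < y0) (hM4 : 0 < M4) (hM5 : 0 < M5)
    (J4 J4α : ℝ → ℝ → ℝ) (gop qop gαop qαop : ℝ)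
    (hJ4 : J4 = fun g q =>
      (y0 / 2) * (∫ x in (0 : ℝ)..x0,
        ((-g * x ^ 2 / 2 + (g * x0 - q) * x + b) - zd) ^ 2)
      + M4 / 2 * g ^ 2 * x0 * y0 + M5 / 2 * q ^ 2 * y0)
    (hJ4α : J4α = fun g q =>
      (y0 / 2) * (∫ x in (0 : ℝ)..x0,
        ((-g * x ^ 2 / 2 + (g * x0 - q) * x + (g * x0 - q) / α + b) - zd) ^ 2)
      + M4 / 2 * g ^ 2 * x0 * y0 + M5 / 2 * q ^ 2 * y0)
    (hgop : gop = (b - zd) / x0 ^ 2 *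
      (((-(5 / 12)) * (-1) - 2 * (2 / 3) * (1 / 3 + M5 / x0 ^ 3)) /
        (4 * (2 / 15 + M4 / x0 ^ 4) * (1 / 3 + M5 / x0 ^ 3) - (-(5 / 12)) ^ 2)))
    (hqop : qop = (b - zd) / x0 *
      (((-(5 / 12)) * (2 / 3) - 2 * (-1) * (2 / 15 + M4 / x0 ^ 4)) /
        (4 * (2 / 15 + M4 / x0 ^ 4) * (1 / 3 + M5 / x0 ^ 3) - (-(5 / 12)) ^ 2)))
    (hgαop : gαop = (b - zd) / x0 ^ 2 *
      (((-(5 / 12) - 5 / (3 * α * x0) - 2 / (α ^ 2 * x0 ^ 2)) * (-1 - 2 / (α * x0))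
          - 2 * (2 / 3 + 2 / (α * x0))
            * (1 / 3 + 1 / (α * x0) + 1 / (α ^ 2 * x0 ^ 2) + M5 / x0 ^ 3)) /
        (4 * (2 / 15 + 2 / (3 * α * x0) + 1 / (α ^ 2 * x0 ^ 2) + M4 / x0 ^ 4)
            * (1 / 3 + 1 / (α * x0) + 1 / (α ^ 2 * x0 ^ 2) + M5 / x0 ^ 3)
          - (-(5 / 12) - 5 / (3 * α * x0) - 2 / (α ^ 2 * x0 ^ 2)) ^ 2)))
    (hqαop : qαop = (b - zd) / x0 *
      (((-(5 / 12) - 5 / (3 * α * x0) - 2 / (α ^ 2 * x0 ^ 2)) * (2 / 3 + 2 / (α * x0))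
          - 2 * (-1 - 2 / (α * x0))
            * (2 / 15 + 2 / (3 * α * x0) + 1 / (α ^ 2 * x0 ^ 2) + M4 / x0 ^ 4)) /
        (4 * (2 / 15 + 2 / (3 * α * x0) + 1 / (α ^ 2 * x0 ^ 2) + M4 / x0 ^ 4)
            * (1 / 3 + 1 / (α * x0) + 1 / (α ^ 2 * x0 ^ 2) + M5 / x0 ^ 3)
          - (-(5 / 12) - 5 / (3 * α * x0) - 2 / (α ^ 2 * x0 ^ 2)) ^ 2))) :
    ((∀ g q : ℝ, J4 gop qop ≤ J4 g q) ∧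
      ∀ g q : ℝ, (g, q) ≠ (gop, qop) → J4 gop qop < J4 g q) ∧
    ((∀ g q : ℝ, J4α gαop qαop ≤ J4α g q) ∧
      ∀ g q : ℝ, (g, q) ≠ (gαop, qαop) → J4α gαop qαop < J4α g q) := by
  open RectangleControl in
  have hS : IsStrictMinimizer J4 gop qop := by
    have hJ : J4 = cost x0 y0 M4 M5 0 b zd := by
      subst hJ4
      funext g q
      simp only [cost, zero_mul, add_zero]
    rw [hJ, hgop, hqop]
    convert isStrictMinimizer_cost hx0 hy0 hM4.le hM5.le 0 b zd using 2 <;>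
      simp only [quadArgmin, C₁, C₂, C₄, C₅, C₆] <;> ring
  have hR : IsStrictMinimizer J4α gαop qαop := by
    have hJ : J4α = cost x0 y0 M4 M5 α⁻¹ b zd := by
      subst hJ4α
      funext g q
      rw [cost, div_eq_inv_mul _ α]
    rw [hJ, hgαop, hqαop]
    convert isStrictMinimizer_cost hx0 hy0 hM4.le hM5.le α⁻¹ b zd using 2 <;>
      simp only [quadArgmin, C₁, C₂, C₄, C₅, C₆] <;> ring
  exact ⟨⟨hS.le, hS⟩, ⟨hR.le, hR⟩⟩

/-- Simultaneous distributed-boundary optimal control on `(g, q)` for the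
rectangle: `J₄` and `J₄α` attain their minima over ℝ² at the unique points
`(g^op, q^op)` and `(g_α^op, q_α^op)` given by the closed formulas. -/
theorem stmt_10 (x0 y0 M4 M5 α b zd : ℝ)
    (hx0 : 0 < x0) (hy0 : 0 < y0) (hM4 : 0 < M4) (hM5 : 0 < M5) (hα : 0 < α)
    (J4 J4α : ℝ → ℝ → ℝ) (gop qop gαop qαop : ℝ)
    (hJ4 : J4 = fun g q =>
      (y0 / 2) * (∫ x in (0 : ℝ)..x0,
        ((-g * x ^ 2 / 2 + (g * x0 - q) * x + b) - zd) ^ 2)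
      + M4 / 2 * g ^ 2 * x0 * y0 + M5 / 2 * q ^ 2 * y0)
    (hJ4α : J4α = fun g q =>
      (y0 / 2) * (∫ x in (0 : ℝ)..x0,
        ((-g * x ^ 2 / 2 + (g * x0 - q) * x + (g * x0 - q) / α + b) - zd) ^ 2)
      + M4 / 2 * g ^ 2 * x0 * y0 + M5 / 2 * q ^ 2 * y0)
    (hgop : gop = (b - zd) / x0 ^ 2 *
      (((-(5 / 12)) * (-1) - 2 * (2 / 3) * (1 / 3 + M5 / x0 ^ 3)) /
        (4 * (2 / 15 + M4 / x0 ^ 4) * (1 / 3 + M5 / x0 ^ 3) - (-(5 / 12)) ^ 2)))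
    (hqop : qop = (b - zd) / x0 *
      (((-(5 / 12)) * (2 / 3) - 2 * (-1) * (2 / 15 + M4 / x0 ^ 4)) /
        (4 * (2 / 15 + M4 / x0 ^ 4) * (1 / 3 + M5 / x0 ^ 3) - (-(5 / 12)) ^ 2)))
    (hgαop : gαop = (b - zd) / x0 ^ 2 *
      (((-(5 / 12) - 5 / (3 * α * x0) - 2 / (α ^ 2 * x0 ^ 2)) * (-1 - 2 / (α * x0))
          - 2 * (2 / 3 + 2 / (α * x0))
            * (1 / 3 + 1 / (α * x0) + 1 / (α ^ 2 * x0 ^ 2) + M5 / x0 ^ 3)) /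
        (4 * (2 / 15 + 2 / (3 * α * x0) + 1 / (α ^ 2 * x0 ^ 2) + M4 / x0 ^ 4)
            * (1 / 3 + 1 / (α * x0) + 1 / (α ^ 2 * x0 ^ 2) + M5 / x0 ^ 3)
          - (-(5 / 12) - 5 / (3 * α * x0) - 2 / (α ^ 2 * x0 ^ 2)) ^ 2)))
    (hqαop : qαop = (b - zd) / x0 *
      (((-(5 / 12) - 5 / (3 * α * x0) - 2 / (α ^ 2 * x0 ^ 2)) * (2 / 3 + 2 / (α * x0))
          - 2 * (-1 - 2 / (α * x0))
            * (2 / 15 + 2 / (3 * α * x0) + 1 / (α ^ 2 * x0 ^ 2) + M4 / x0 ^ 4)) /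
        (4 * (2 / 15 + 2 / (3 * α * x0) + 1 / (α ^ 2 * x0 ^ 2) + M4 / x0 ^ 4)
            * (1 / 3 + 1 / (α * x0) + 1 / (α ^ 2 * x0 ^ 2) + M5 / x0 ^ 3)
          - (-(5 / 12) - 5 / (3 * α * x0) - 2 / (α ^ 2 * x0 ^ 2)) ^ 2))) :
    ((∀ g q : ℝ, J4 gop qop ≤ J4 g q) ∧
      ∀ g q : ℝ, (g, q) ≠ (gop, qop) → J4 gop qop < J4 g q) ∧
    ((∀ g q : ℝ, J4α gαop qαop ≤ J4α g q) ∧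
      ∀ g q : ℝ, (g, q) ≠ (gαop, qαop) → J4α gαop qαop < J4α g q) :=
  stmt_10_general x0 y0 M4 M5 α b zd hx0 hy0 hM4 hM5 J4 J4α gop qop gαop qαop hJ4 hJ4α hgop hqop
    hgαop hqαop
end

section
/- Let x0 > 0, M₃ > 0, α > 0 and g, q, z_d ∈ ℝ. Define b_op = -(C₅·g·x0² + C₆·q·x0 - 2·C₃·z_d) / (2·(C₃ + M₃/x0)) with C₃ = 1, C₅ = 2/3, C₆ = -1, and b_{α,op} = -(C₅α·g·x0² + C₆α·q·x0 - 2·C₃α·z_d) / (2·(C₃α + M₃/x0)) with C₃α = 1, C₅α = 2/3 + 2/(α·x0), C₆α = -1 - 2/(α·x0). Then exactly |b_{α,op} - b_op| = (1/α)·x0·|q - g·x0| / (M₃ + x0). In particular b_{α,op} → b_op as α → ∞ with lim_{α→∞} α·|b_{α,op} - b_op| = x0·|q - g·x0|/(M₃ + x0), so the order of convergence is exactly 1/α (when q ≠ g·x0). -/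
open Filter Topology

/-- The closed-form optimal constant boundary temperature of the paper, in terms of the constants
`C₃, C₅, C₆` of the problem. -/
noncomputable def optimalBoundaryControl (C3 C5 C6 x0 M3 g q zd : ℝ) : ℝ :=
  -(C5 * g * x0 ^ 2 + C6 * q * x0 - 2 * C3 * zd) / (2 * (C3 + M3 / x0))

lemma optimalBoundaryControl_sub (C3 C5 C5' C6 C6' x0 M3 g q zd : ℝ) :
    optimalBoundaryControl C3 C5' C6' x0 M3 g q zd - optimalBoundaryControl C3 C5 C6 x0 M3 g q zd =
      -((C5' - C5) * g * x0 ^ 2 + (C6' - C6) * q * x0) / (2 * (C3 + M3 / x0)) := by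
  unfold optimalBoundaryControl
  rw [← sub_div]
  ring

/-- The Robin constants `C₅α = C₅ + 2/(α x0)`, `C₆α = C₆ - 2/(α x0)` shift the optimal control
by a multiple of `1/α`. -/
lemma optimalBoundaryControl_robin_sub {x0 M3 α : ℝ} (g q zd : ℝ) (hx0 : x0 ≠ 0)
    (hM3x0 : M3 + x0 ≠ 0) (hα : α ≠ 0) :
    optimalBoundaryControl 1 (2 / 3 + 2 / (α * x0)) (-1 - 2 / (α * x0)) x0 M3 g q zd -
        optimalBoundaryControl 1 (2 / 3) (-1) x0 M3 g q zd =
      x0 * (q - g * x0) / (M3 + x0) * α⁻¹ := by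
  have hx0M3 : x0 + M3 ≠ 0 := by rwa [add_comm]
  rw [optimalBoundaryControl_sub]
  field_simp
  ring

lemma tendsto_of_sub_eq_mul_inv {f : ℝ → ℝ} {b c : ℝ} (hf : ∀ α, 0 < α → f α - b = c * α⁻¹) :
    Tendsto f atTop (𝓝 b) ∧ Tendsto (fun α => α * |f α - b|) atTop (𝓝 |c|) := by
  have hf' : ∀ᶠ α in atTop, f α - b = c * α⁻¹ := (eventually_gt_atTop 0).mono hf
  constructor
  · have h : Tendsto (fun α : ℝ => b + c * α⁻¹) atTop (𝓝 (b + c * 0)) :=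
      (tendsto_inv_atTop_zero.const_mul c).const_add b
    rw [mul_zero, add_zero] at h
    exact h.congr' (hf'.mono fun α hα => by linarith)
  · refine tendsto_const_nhds.congr' ?_
    filter_upwards [eventually_gt_atTop 0, hf'] with α hα hfα
    rw [hfα, abs_mul, abs_inv, abs_of_pos hα]
    field_simp

/-- Exact order of convergence `1/α` of the optimal boundary control
`b_{α,op} → b_op` on the rectangle. -/
theorem stmt_11 (x0 M3 g q zd : ℝ) (hx0 : 0 < x0) (hM3 : 0 < M3)
    (bop : ℝ) (bαop : ℝ → ℝ)
    (hbop : bop = -((2 / 3) * g * x0 ^ 2 + (-1) * q * x0 - 2 * 1 * zd) /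
      (2 * (1 + M3 / x0)))
    (hbαop : bαop = fun α =>
      -((2 / 3 + 2 / (α * x0)) * g * x0 ^ 2 + (-1 - 2 / (α * x0)) * q * x0
          - 2 * 1 * zd) / (2 * (1 + M3 / x0))) :
    (∀ α : ℝ, 0 < α →
      |bαop α - bop| = (1 / α) * x0 * |q - g * x0| / (M3 + x0)) ∧
    Tendsto bαop atTop (nhds bop) ∧
    Tendsto (fun α => α * |bαop α - bop|) atTop
      (nhds (x0 * |q - g * x0| / (M3 + x0))) := by
  have hM3x0 : 0 < M3 + x0 := by linarith
  have hdiff : ∀ α, 0 < α → bαop α - bop = x0 * (q - g * x0) / (M3 + x0) * α⁻¹ := fun α hα => by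
    subst hbop hbαop
    exact optimalBoundaryControl_robin_sub g q zd hx0.ne' hM3x0.ne' hα.ne'
  have habs_coeff : |x0 * (q - g * x0) / (M3 + x0)| = x0 * |q - g * x0| / (M3 + x0) := by
    rw [abs_div, abs_mul, abs_of_pos hx0, abs_of_pos hM3x0]
  obtain ⟨hlim, hrate⟩ := tendsto_of_sub_eq_mul_inv hdiff
  refine ⟨fun α hα => ?_, hlim, habs_coeff ▸ hrate⟩
  rw [hdiff α hα, abs_mul, habs_coeff, abs_inv, abs_of_pos hα]
  ring
end

section
/- Let x0 > 0, M₁ > 0 and q, b, z_d ∈ ℝ. For α > 0 define g_op = -(C₄·q·x0 + C₅·(b - z_d)) / (2·x0²·(C₁ + M₁/x0⁴)) with C₁ = 2/15, C₄ = -5/12, C₅ = 2/3, and g_{α,op} = -(C₄α·q·x0 + C₅α·(b - z_d)) / (2·x0²·(C₁α + M₁/x0⁴)) with C₁α = 2/15 + 2/(3·α·x0) + 1/(α²·x0²), C₄α = -5/12 - 5/(3·α·x0) - 2/(α²·x0²), C₅α = 2/3 + 2/(α·x0). Then g_{α,op} → g_op as α → ∞, and the convergence has order 1/α: there exists a constant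 C > 0 such that |g_{α,op} - g_op| ≤ C/α for all α ≥ 1. -/
open Filter Topology

/-!
With `t = 1/α`, both numerator and denominator of `g_{α,op}` are quadratic polynomials in `t`
whose values at `t = 0` give `g_op`, and the denominator only grows with `t ≥ 0`.
So `g_{α,op} - g_op` is `t` times a quantity bounded uniformly for `t ∈ [0, 1]`.
-/

theorem tendsto_of_abs_sub_le_div {f : ℝ → ℝ} {L C : ℝ}
    (h : ∀ α, 1 ≤ α → |f α - L| ≤ C / α) : Tendsto f atTop (𝓝 L) := by
  rw [← tendsto_sub_nhds_zero_iff]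
  refine squeeze_zero_norm' (a := fun α => C / α) ?_ (tendsto_const_nhds.div_atTop tendsto_id)
  filter_upwards [eventually_ge_atTop 1] with α hα using h α hα

theorem abs_div_quadratic_sub_div_le {n₀ n₁ n₂ d₀ d₁ d₂ t : ℝ} (hd₀ : 0 < d₀) (hd₁ : 0 ≤ d₁)
    (hd₂ : 0 ≤ d₂) (ht₀ : 0 ≤ t) (ht₁ : t ≤ 1) :
    |(n₀ + n₁ * t + n₂ * t ^ 2) / (d₀ + d₁ * t + d₂ * t ^ 2) - n₀ / d₀| ≤
      (|n₁ * d₀ - n₀ * d₁| + |n₂ * d₀ - n₀ * d₂|) / d₀ ^ 2 * t := by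
  set d := d₀ + d₁ * t + d₂ * t ^ 2
  have hd : d₀ ≤ d := by linarith [mul_nonneg hd₁ ht₀, mul_nonneg hd₂ (sq_nonneg t)]
  have hdiff : (n₀ + n₁ * t + n₂ * t ^ 2) / d - n₀ / d₀ =
      t * ((n₁ * d₀ - n₀ * d₁) + (n₂ * d₀ - n₀ * d₂) * t) / (d * d₀) := by
    rw [div_sub_div _ _ (by linarith) hd₀.ne']
    ring
  have hnum : |(n₁ * d₀ - n₀ * d₁) + (n₂ * d₀ - n₀ * d₂) * t| ≤
      |n₁ * d₀ - n₀ * d₁| + |n₂ * d₀ - n₀ * d₂| := by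
    refine (abs_add_le _ _).trans (add_le_add_right ?_ _)
    rw [abs_mul, abs_of_nonneg ht₀]
    exact mul_le_of_le_one_right (abs_nonneg _) ht₁
  rw [hdiff, abs_div, abs_mul, abs_of_nonneg ht₀, abs_of_pos (by positivity : 0 < d * d₀)]
  calc t * |(n₁ * d₀ - n₀ * d₁) + (n₂ * d₀ - n₀ * d₂) * t| / (d * d₀)
      ≤ t * (|n₁ * d₀ - n₀ * d₁| + |n₂ * d₀ - n₀ * d₂|) / (d₀ * d₀) := by gcongr
    _ = _ := by ring

theorem exists_pos_abs_div_quadratic_sub_div_le {n₀ n₁ n₂ d₀ d₁ d₂ : ℝ} (hd₀ : 0 < d₀)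
    (hd₁ : 0 ≤ d₁) (hd₂ : 0 ≤ d₂) :
    ∃ C, 0 < C ∧ ∀ t, 0 ≤ t → t ≤ 1 →
      |(n₀ + n₁ * t + n₂ * t ^ 2) / (d₀ + d₁ * t + d₂ * t ^ 2) - n₀ / d₀| ≤ C * t := by
  refine ⟨(|n₁ * d₀ - n₀ * d₁| + |n₂ * d₀ - n₀ * d₂|) / d₀ ^ 2 + 1, by positivity,
    fun t ht₀ ht₁ => (abs_div_quadratic_sub_div_le hd₀ hd₁ hd₂ ht₀ ht₁).trans ?_⟩
  exact mul_le_mul_of_nonneg_right (le_add_of_nonneg_right zero_le_one) ht₀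

/-- Convergence of the optimal distributed control `g_{α,op} → g_op` on the
rectangle, with order of convergence `1/α`. -/
theorem stmt_12 (x0 M1 q b zd : ℝ) (hx0 : 0 < x0) (hM1 : 0 < M1)
    (gop : ℝ) (gαop : ℝ → ℝ)
    (hgop : gop = -((-(5 / 12)) * q * x0 + (2 / 3) * (b - zd)) /
      (2 * x0 ^ 2 * (2 / 15 + M1 / x0 ^ 4)))
    (hgαop : gαop = fun α =>
      -((-(5 / 12) - 5 / (3 * α * x0) - 2 / (α ^ 2 * x0 ^ 2)) * q * x0
          + (2 / 3 + 2 / (α * x0)) * (b - zd)) /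
        (2 * x0 ^ 2 *
          (2 / 15 + 2 / (3 * α * x0) + 1 / (α ^ 2 * x0 ^ 2) + M1 / x0 ^ 4))) :
    Tendsto gαop atTop (nhds gop) ∧
    ∃ C : ℝ, 0 < C ∧ ∀ α : ℝ, 1 ≤ α → |gαop α - gop| ≤ C / α := by
  have hgαop_quadratic : ∀ α, 0 < α → gαop α =
      (-((-(5 / 12)) * q * x0 + (2 / 3) * (b - zd)) + (5 / 3 * q - 2 * (b - zd) / x0) * α⁻¹
          + 2 * q / x0 * α⁻¹ ^ 2) /
        (2 * x0 ^ 2 * (2 / 15 + M1 / x0 ^ 4) + 4 * x0 / 3 * α⁻¹ + 2 * α⁻¹ ^ 2) := by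
    intro α hα
    rw [hgαop]
    field_simp
    ring
  obtain ⟨C, hC, hbound⟩ := exists_pos_abs_div_quadratic_sub_div_le
    (n₀ := -((-(5 / 12)) * q * x0 + (2 / 3) * (b - zd))) (n₁ := 5 / 3 * q - 2 * (b - zd) / x0)
    (n₂ := 2 * q / x0) (d₀ := 2 * x0 ^ 2 * (2 / 15 + M1 / x0 ^ 4)) (d₁ := 4 * x0 / 3)
    (by positivity) (by positivity) zero_le_two
  have hrate : ∀ α : ℝ, 1 ≤ α → |gαop α - gop| ≤ C / α := by
    intro α hα
    rw [hgαop_quadratic α (by linarith), hgop, div_eq_mul_inv C]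
    exact hbound α⁻¹ (by positivity) (inv_le_one_of_one_le₀ hα)
  exact ⟨tendsto_of_abs_sub_le_div hrate, C, hC, hrate⟩
end

section
/- Let 0 < r1 < r2, α > 0 and g, q, b ∈ ℝ. Let u(r) = g·(r1²/2)·( (r2/r1)²·log(r/r1) - (1/2)·(r/r1)² + 1/2 ) - q·r2·log(r/r1) + b and u_α(r) = u(r) + (1/(α·r1))·( g·(r2² - r1²)/2 - q·r2 ). Then the L² distance between u_α and u on the annulus Ω₂ = {r1 < |x| < r2} satisfies exactly ( 2π·∫_{r1}^{r2} r·(u_α(r) - u(r))² dr )^{1/2} = K₂/α, where K₂ = √π · (r2² - r1²)^{1/2} · |2·q·r2 - g·(r2² - r1²)| / (2·r1). In particular u_α converges to u in L²(Ω₂) with rate exactly 1/α as α → ∞. -/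
/-!
The Robin state differs from the Dirichlet–Neumann state by a constant `c` of size `O(1/α)`,
and the `L²(Ω₂)` norm of a constant is `√π · √(r2² - r1²) · |c|`, because
`∫_{r1}^{r2} r dr = (r2² - r1²)/2`.
-/

open Real

theorem sqrt_two_pi_integral_mul_sq_const (a b c : ℝ) :
    Real.sqrt (2 * π * ∫ r in a..b, r * c ^ 2) =
      Real.sqrt π * Real.sqrt (b ^ 2 - a ^ 2) * |c| := by
  rw [intervalIntegral.integral_mul_const, integral_id,
    show 2 * π * ((b ^ 2 - a ^ 2) / 2 * c ^ 2) = π * ((b ^ 2 - a ^ 2) * c ^ 2) by ring,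
    Real.sqrt_mul pi_pos.le, Real.sqrt_mul' _ (sq_nonneg c), Real.sqrt_sq_eq_abs, mul_assoc]

theorem abs_one_div_mul_mul_sub {r1 α : ℝ} (hr1 : 0 < r1) (hα : 0 < α) (x y : ℝ) :
    |1 / (α * r1) * (x / 2 - y)| = |2 * y - x| / (2 * r1) / α := by
  rw [show 1 / (α * r1) * (x / 2 - y) = -(2 * y - x) / (2 * r1) / α by
      field_simp; ring,
    abs_div, abs_div, abs_neg, abs_of_pos hα, abs_of_pos (by positivity : (0 : ℝ) < 2 * r1)]

theorem stmt_15_general (r1 r2 α g q : ℝ) (hr1 : 0 < r1) (hα : 0 < α)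
    (u uα : ℝ → ℝ)
    (huα : uα = fun r =>
      u r + (1 / (α * r1)) * (g * (r2 ^ 2 - r1 ^ 2) / 2 - q * r2)) :
    Real.sqrt (2 * π * ∫ r in r1..r2, r * (uα r - u r) ^ 2) =
      (Real.sqrt π * Real.sqrt (r2 ^ 2 - r1 ^ 2)
        * |2 * q * r2 - g * (r2 ^ 2 - r1 ^ 2)| / (2 * r1)) / α := by
  have hgap : ∀ r, uα r - u r = 1 / (α * r1) * (g * (r2 ^ 2 - r1 ^ 2) / 2 - q * r2) := by
    simp [huα]
  simp only [hgap]
  rw [sqrt_two_pi_integral_mul_sq_const, abs_one_div_mul_mul_sub hr1 hα, ← mul_assoc 2 q r2]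
  ring

/-- Exact rate of convergence of the state `u_α` to `u` in `L²(Ω₂)` on the
annulus: `‖u_α - u‖_{L²(Ω₂)} = K₂/α`. -/
theorem stmt_15 (r1 r2 α g q b : ℝ) (hr1 : 0 < r1) (hr12 : r1 < r2) (hα : 0 < α)
    (u uα : ℝ → ℝ)
    (hu : u = fun r =>
      g * (r1 ^ 2 / 2) * ((r2 / r1) ^ 2 * Real.log (r / r1)
        - (1 / 2) * (r / r1) ^ 2 + 1 / 2) - q * r2 * Real.log (r / r1) + b)
    (huα : uα = fun r =>
      u r + (1 / (α * r1)) * (g * (r2 ^ 2 - r1 ^ 2) / 2 - q * r2)) :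
    Real.sqrt (2 * π * ∫ r in r1..r2, r * (uα r - u r) ^ 2) =
      (Real.sqrt π * Real.sqrt (r2 ^ 2 - r1 ^ 2)
        * |2 * q * r2 - g * (r2 ^ 2 - r1 ^ 2)| / (2 * r1)) / α :=
  stmt_15_general r1 r2 α g q hr1 hα u uα huα
end

section
/- Let 0 < r1 < r2, M₃ > 0 and g, q, z_d ∈ ℝ. For b ∈ ℝ define u_b(r) = g·(r1²/2)·( (r2/r1)²·log(r/r1) - (1/2)·(r/r1)² + 1/2 ) - q·r2·log(r/r1) + b and the cost J₃(b) = π·∫_{r1}^{r2} r·(u_b(r) - z_d)² dr + π·M₃·r1·b². Then J₃ attains its minimum over ℝ at the unique point b_op = -( E₅·g·r1² + E₆·q·r1 - 2·E₃·z_d ) / ( 2·(E₃ + M₃/r1) ), where E₃ = (1/2)·( (r2/r1)² - 1 ), E₅ = (1/2)·( -1/4 + (r2/r1)² + (r2/r1)⁴·( log(r2/r1) - 3/4 ) ), and E₆ = -( (1/2)·(r2/r1) + (r2/r1)³·( log(r2/r1) - 1/2 ) ). -/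
/-!
Expanding the square, `J₃ b = π (A + 2 B b + K b²)` with `K = (r2² - r1²)/2 + M₃ r1 > 0`
and `B = ∫ r (u₀ - z_d) dr`, so `J₃` has the unique minimiser `-B/K`. The only
non-polynomial part of `B` is `∫ r log (r / r1) dr`, and evaluating it identifies `-B/K`
with `b_op`.
-/

open Real intervalIntegral Set

theorem continuousOn_log_div {a b c : ℝ} (ha : 0 < a) (hb : 0 < b) (hc : c ≠ 0) :
    ContinuousOn (fun r => log (r / c)) (uIcc a b) :=
  (continuousOn_id.div_const c).log fun _ hx =>
    div_ne_zero ((lt_min ha hb).trans_le hx.1).ne' hc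

theorem integral_mul_log_div {a b : ℝ} (ha : 0 < a) (hb : 0 < b) :
    ∫ r in a..b, r * log (r / a) = b ^ 2 / 2 * log (b / a) - b ^ 2 / 4 + a ^ 2 / 4 := by
  have hderiv : ∀ x ∈ uIcc a b, HasDerivAt (fun r => r ^ 2 / 2 * log (r / a) - r ^ 2 / 4)
      (x * log (x / a)) x := by
    intro x hx
    have hx : x ≠ 0 := ((lt_min ha hb).trans_le hx.1).ne'
    have hlog : HasDerivAt (fun r => log (r / a)) (1 / x) x := by
      convert ((hasDerivAt_id' x).div_const a).log (div_ne_zero hx ha.ne') using 1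
      field_simp
    refine ((((hasDerivAt_pow 2 x).div_const 2).fun_mul hlog).fun_sub
      ((hasDerivAt_pow 2 x).div_const 4)).congr_deriv ?_
    field_simp
    ring
  have hint : IntervalIntegrable (fun r => r * log (r / a)) MeasureTheory.volume a b :=
    (continuousOn_id.mul (continuousOn_log_div ha hb ha.ne')).intervalIntegrable
  rw [integral_eq_sub_of_hasDerivAt hderiv hint, div_self ha.ne', log_one]
  ring

theorem integral_mul_add_const_sq {w f : ℝ → ℝ} {a b : ℝ} (c : ℝ)
    (hw : IntervalIntegrable w MeasureTheory.volume a b)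
    (hwf : IntervalIntegrable (fun x => w x * f x) MeasureTheory.volume a b)
    (hwf2 : IntervalIntegrable (fun x => w x * f x ^ 2) MeasureTheory.volume a b) :
    ∫ x in a..b, w x * (f x + c) ^ 2 =
      (∫ x in a..b, w x * f x ^ 2) + 2 * c * (∫ x in a..b, w x * f x)
        + c ^ 2 * ∫ x in a..b, w x := by
  have hexp : (fun x => w x * (f x + c) ^ 2) =
      fun x => w x * f x ^ 2 + 2 * c * (w x * f x) + c ^ 2 * w x := by
    funext x
    ring
  rw [hexp, integral_add (hwf2.add (hwf.const_mul _)) (hw.const_mul _),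
    integral_add hwf2 (hwf.const_mul _), integral_const_mul, integral_const_mul]

theorem quadratic_min_unique {f : ℝ → ℝ} {A B K c : ℝ} (hK : 0 < K)
    (hf : ∀ x, f x = A + 2 * B * x + K * x ^ 2) (hc : B = -(c * K)) :
    (∀ x, f c ≤ f x) ∧ ∀ x, x ≠ c → f c < f x := by
  have hgap : ∀ x, f x - f c = K * (x - c) ^ 2 := fun x => by rw [hf, hf, hc]; ring
  refine ⟨fun x => sub_nonneg.mp (hgap x ▸ by positivity), fun x hx => sub_pos.mp ?_⟩
  have := sub_ne_zero.mpr hx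
  rw [hgap]
  positivity

/-- The state `u_b` of the statement is `radialState r1 r2 g q + b`. -/
noncomputable def radialState (r1 r2 g q r : ℝ) : ℝ :=
  g * (r1 ^ 2 / 2) * ((r2 / r1) ^ 2 * log (r / r1) - (1 / 2) * (r / r1) ^ 2 + 1 / 2)
    - q * r2 * log (r / r1)

section radialState

variable {r1 r2 : ℝ} (g q : ℝ)

theorem continuousOn_radialState (hr1 : 0 < r1) (hr2 : 0 < r2) :
    ContinuousOn (radialState r1 r2 g q) (uIcc r1 r2) := by
  have hlog := continuousOn_log_div hr1 hr2 hr1.ne'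
  unfold radialState
  fun_prop

theorem integral_mul_radialState_sub (hr1 : 0 < r1) (hr2 : 0 < r2) (zd : ℝ) :
    ∫ r in r1..r2, r * (radialState r1 r2 g q r - zd) =
      (g * r2 ^ 2 / 2 - q * r2) * (r2 ^ 2 / 2 * log (r2 / r1) - r2 ^ 2 / 4 + r1 ^ 2 / 4)
        - g / 16 * (r2 ^ 4 - r1 ^ 4) + (g * r1 ^ 2 / 4 - zd) * ((r2 ^ 2 - r1 ^ 2) / 2) := by
  have hsplit : (fun r => r * (radialState r1 r2 g q r - zd)) = fun r =>
      (g * r2 ^ 2 / 2 - q * r2) * (r * log (r / r1))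
        + (-(g / 4) * r ^ 3 + (g * r1 ^ 2 / 4 - zd) * r) := by
    funext r
    unfold radialState
    field_simp
    ring
  have hlog : IntervalIntegrable (fun r => r * log (r / r1)) MeasureTheory.volume r1 r2 :=
    (continuousOn_id.mul (continuousOn_log_div hr1 hr2 hr1.ne')).intervalIntegrable
  have hpoly {p : ℝ → ℝ} (hp : Continuous p) :
      IntervalIntegrable p MeasureTheory.volume r1 r2 :=
    hp.intervalIntegrable _ _
  rw [hsplit, integral_add (hlog.const_mul _) (hpoly (by fun_prop)), integral_const_mul,
    integral_mul_log_div hr1 hr2, integral_add (hpoly (by fun_prop)) (hpoly (by fun_prop)),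
    integral_const_mul, integral_const_mul, integral_pow, integral_id]
  ring

theorem integral_mul_radialState_add_sub_sq (hr1 : 0 < r1) (hr2 : 0 < r2) (b zd : ℝ) :
    ∫ r in r1..r2, r * (radialState r1 r2 g q r + b - zd) ^ 2 =
      (∫ r in r1..r2, r * (radialState r1 r2 g q r - zd) ^ 2)
        + 2 * b * (∫ r in r1..r2, r * (radialState r1 r2 g q r - zd))
        + b ^ 2 * ((r2 ^ 2 - r1 ^ 2) / 2) := by
  have hF : ContinuousOn (fun r => radialState r1 r2 g q r - zd) (uIcc r1 r2) :=
    (continuousOn_radialState g q hr1 hr2).sub continuousOn_const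
  simp_rw [add_sub_right_comm _ b zd]
  rw [integral_mul_add_const_sq (w := fun r => r) b
    ((by fun_prop : Continuous _).intervalIntegrable _ _)
    (continuousOn_id.mul hF).intervalIntegrable
    (continuousOn_id.mul (hF.pow 2)).intervalIntegrable, integral_id]

end radialState

/-- Boundary optimal control on the constant temperature `b` on the inner circle
of the annulus: `J₃` attains its minimum over ℝ at the unique point `b_op`. -/
theorem stmt_16 (r1 r2 M3 g q zd : ℝ) (hr1 : 0 < r1) (hr12 : r1 < r2) (hM3 : 0 < M3)
    (J3 : ℝ → ℝ) (bop E3 E5 E6 : ℝ)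
    (hJ3 : J3 = fun b =>
      π * (∫ r in r1..r2, r *
        ((g * (r1 ^ 2 / 2) * ((r2 / r1) ^ 2 * Real.log (r / r1)
            - (1 / 2) * (r / r1) ^ 2 + 1 / 2)
          - q * r2 * Real.log (r / r1) + b) - zd) ^ 2)
      + π * M3 * r1 * b ^ 2)
    (hE3 : E3 = (1 / 2) * ((r2 / r1) ^ 2 - 1))
    (hE5 : E5 = (1 / 2) * (-(1 / 4) + (r2 / r1) ^ 2
      + (r2 / r1) ^ 4 * (Real.log (r2 / r1) - 3 / 4)))
    (hE6 : E6 = -((1 / 2) * (r2 / r1)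
      + (r2 / r1) ^ 3 * (Real.log (r2 / r1) - 1 / 2)))
    (hbop : bop = -(E5 * g * r1 ^ 2 + E6 * q * r1 - 2 * E3 * zd) /
      (2 * (E3 + M3 / r1))) :
    (∀ b : ℝ, J3 bop ≤ J3 b) ∧ ∀ b : ℝ, b ≠ bop → J3 bop < J3 b := by
  have hr2 : 0 < r2 := hr1.trans hr12
  have hK : 0 < (r2 ^ 2 - r1 ^ 2) / 2 + M3 * r1 := by
    nlinarith [mul_pos hM3 hr1, mul_pos (sub_pos.2 hr12) (add_pos hr1 hr2)]
  have hJ : ∀ b, J3 b = π * (∫ r in r1..r2, r * (radialState r1 r2 g q r - zd) ^ 2)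
      + 2 * (π * ∫ r in r1..r2, r * (radialState r1 r2 g q r - zd)) * b
      + π * ((r2 ^ 2 - r1 ^ 2) / 2 + M3 * r1) * b ^ 2 := by
    intro b
    rw [hJ3]
    change π * (∫ r in r1..r2, r * (radialState r1 r2 g q r + b - zd) ^ 2) + _ = _
    rw [integral_mul_radialState_add_sub_sq g q hr1 hr2]
    ring
  have hB : ∫ r in r1..r2, r * (radialState r1 r2 g q r - zd) =
      -(bop * ((r2 ^ 2 - r1 ^ 2) / 2 + M3 * r1)) := by
    have hK' : (r2 ^ 2 - r1 ^ 2) / 2 + M3 * r1 = r1 * (r1 * E3 + M3) := by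
      rw [hE3]
      field_simp
    have hD : r1 * E3 + M3 ≠ 0 := (pos_of_mul_pos_right (hK' ▸ hK) hr1.le).ne'
    have hmoment : ∫ r in r1..r2, r * (radialState r1 r2 g q r - zd) =
        (E5 * g * r1 ^ 2 + E6 * q * r1 - 2 * E3 * zd) * r1 ^ 2 / 2 := by
      rw [integral_mul_radialState_sub g q hr1 hr2, hE5, hE6, hE3, log_div hr2.ne' hr1.ne']
      field_simp
      ring
    rw [hmoment, hK', hbop]
    field_simp
  exact quadratic_min_unique (by positivity) hJ (by rw [hB]; ring)
end
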